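/- arXiv:1502.02855 — 2 statements merged into one kernel-verified Lean document; each statement's English description precedes it below -/
import Mathlib

section
/- Counting solutions of a quadratic congruence (contribution q^{k/2}): let F₀ be a p-adic field, p ≠ 2, with uniformizer π and residue field of size q. Let a ∈ F₀ with v(a) = k/2 for k even, and let t, s be integers with k < t. The set of classes ⋆ ∈ π^{max(0, t-s)}O/π^t O satisfying (⋆ - a)² ∈ a² + π^t O and v(⋆) = v(2a) (the '-1 branch', i.e. ⋆ ≡ 2a mod π^{t - k/2}) is nonempty iff t - s ≤ k/2, in which case it has exactly q^{k/2} elements. -/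
/-!
Write `c = 2a`, so `v(c) = k/2`. On the coset `c + π^(t-k/2)O` the congruence
`(x - a)² ≡ a²` is automatic, since `(x - a)² - a² = x (x - c)` and `v(x) ≥ k/2`. So the
set is the intersection of `π^(t-s)O` with that coset, which is nonempty iff `c` lies in
`π^(t-s)O + π^(t-k/2)O`, i.e. iff `t - s ≤ k/2` because `k/2 < t - k/2`. In that case it is
the whole coset, and multiplication by `π^(t-k/2)` identifies `O/π^(k/2)` with it.
-/

open Ideal

theorem pow_dvd_pow_mul_units_iff {α : Type*} [CommMonoidWithZero α] [IsCancelMulZero α]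
    {π : α} (hπ : Irreducible π) (u : αˣ) {n k : ℕ} : π ^ n ∣ π ^ k * u ↔ n ≤ k :=
  Units.dvd_mul_right.trans (pow_dvd_pow_iff hπ.ne_zero hπ.not_isUnit)

section PowerQuotient

variable {R : Type*} [CommRing R] {π : R}

theorem mem_span_singleton_pow_iff {n : ℕ} {x : R} : x ∈ span {π} ^ n ↔ π ^ n ∣ x := by
  rw [span_singleton_pow, mem_span_singleton]

theorem mk_mem_map_span_singleton_pow_iff {m t : ℕ} (h : m ≤ t) {x : R} :
    Ideal.Quotient.mk (span {π} ^ t) x ∈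
        (span {π} ^ m).map (Ideal.Quotient.mk (span {π} ^ t)) ↔ π ^ m ∣ x := by
  rw [mem_quotient_iff_mem (pow_le_pow_right h), mem_span_singleton_pow_iff]

theorem sub_sq_eq_sq_of_sub_two_mul_mem {k t : ℕ} (hkt : 2 * k ≤ t) {a : R} (ha : π ^ k ∣ a)
    {x : R ⧸ span {π} ^ t}
    (hx : x - Ideal.Quotient.mk _ (2 * a) ∈
      (span {π} ^ (t - k)).map (Ideal.Quotient.mk (span {π} ^ t))) :
    (x - Ideal.Quotient.mk _ a) ^ 2 = Ideal.Quotient.mk _ a ^ 2 := by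
  obtain ⟨r, rfl⟩ := Ideal.Quotient.mk_surjective x
  rw [← map_sub, mk_mem_map_span_singleton_pow_iff (by omega)] at hx
  have hr : π ^ k ∣ r := by
    simpa using dvd_add ((pow_dvd_pow π (by omega)).trans hx) (ha.mul_left 2)
  have hprod : π ^ t ∣ r * (r - 2 * a) := by
    simpa [← pow_add, show k + (t - k) = t by omega] using mul_dvd_mul hr hx
  rw [← sub_eq_zero, ← map_sub, ← map_pow, ← map_pow, ← map_sub,
    Ideal.Quotient.eq_zero_iff_mem, mem_span_singleton_pow_iff]
  convert hprod using 1
  ring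

theorem card_map_span_singleton_pow [IsDomain R] (hπ : π ≠ 0) {m t : ℕ} (h : m ≤ t) :
    Nat.card ((span {π} ^ m).map (Ideal.Quotient.mk (span {π} ^ t))) =
      Nat.card (R ⧸ span {π} ^ (t - m)) := by
  let φ : R →ₗ[R] R ⧸ span {π} ^ t :=
    (span {π} ^ t).mkQ ∘ₗ LinearMap.mulLeft R (π ^ m)
  have hker : LinearMap.ker φ = span {π} ^ (t - m) := by
    ext x
    rw [LinearMap.mem_ker, mem_span_singleton_pow_iff]
    change Ideal.Quotient.mk _ (π ^ m * x) = 0 ↔ _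
    rw [Ideal.Quotient.eq_zero_iff_mem, mem_span_singleton_pow_iff,
      ← Nat.add_sub_cancel' h, pow_add, Nat.add_sub_cancel_left,
      mul_dvd_mul_iff_left (pow_ne_zero _ hπ)]
  have hrange : ∀ y, y ∈ (span {π} ^ m).map (Ideal.Quotient.mk (span {π} ^ t)) ↔
      y ∈ LinearMap.range φ := by
    intro y
    rw [mem_map_iff_of_surjective _ Ideal.Quotient.mk_surjective, LinearMap.mem_range]
    constructor
    · rintro ⟨_, hz, rfl⟩
      obtain ⟨c, rfl⟩ := mem_span_singleton_pow_iff.mp hz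
      exact ⟨c, rfl⟩
    · rintro ⟨c, rfl⟩
      exact ⟨_, mem_span_singleton_pow_iff.mpr (dvd_mul_right _ c), rfl⟩
  rw [Nat.card_congr (Equiv.subtypeEquivRight hrange), ← hker,
    Nat.card_congr φ.quotKerEquivRange.toEquiv]

theorem card_quotient_span_singleton_pow [IsDedekindDomain R] (hπ : Prime π) (n : ℕ) :
    Nat.card (R ⧸ span {π} ^ n) = Nat.card (R ⧸ span {π}) ^ n := by
  have : (span {π}).IsPrime := (span_singleton_prime hπ.ne_zero).mpr hπ
  simpa only [Submodule.cardQuot_apply] using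
    cardQuot_pow_of_prime (P := span {π}) (by simpa using hπ.ne_zero) (i := n)

end PowerQuotient

namespace Submodule

variable {A M : Type*} [Ring A] [AddCommGroup M] [Module A M] {P Q : Submodule A M} {c : M}

theorem setOf_mem_and_sub_mem_nonempty_iff :
    {x | x ∈ P ∧ x - c ∈ Q}.Nonempty ↔ c ∈ P ⊔ Q := by
  constructor
  · rintro ⟨x, hxP, hxQ⟩
    simpa using sub_mem_sup hxP hxQ
  · intro hc
    obtain ⟨y, hy, z, hz, rfl⟩ := mem_sup.mp hc
    exact ⟨y, hy, by simpa using Q.neg_mem hz⟩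

theorem card_setOf_mem_and_sub_mem (hQP : Q ≤ P) (hc : c ∈ P) :
    Nat.card {x | x ∈ P ∧ x - c ∈ Q} = Nat.card Q :=
  Nat.card_congr <| Equiv.subtypeEquiv (Equiv.subRight c) fun x =>
    ⟨fun h => h.2, fun h => ⟨by simpa using P.add_mem (hQP h) hc, h⟩⟩

end Submodule

/-- Counting solutions of a quadratic congruence (the '-1 branch', contributing
`q^{k/2}`): in a discrete valuation ring `O` with residue field of size `q` and
residue characteristic ≠ 2, let `a` have valuation `k/2` (with `k = 2·k2` even) and
`k < t`. The set of classes `⋆ ∈ π^{max(0,t-s)}O/π^tO` with `(⋆ - a)² ≡ a² mod π^t`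
and `⋆ ≡ 2a mod π^{t-k/2}` (i.e. `v(⋆) = v(2a)`) is nonempty iff `t - s ≤ k/2`,
in which case it has exactly `q^{k/2}` elements. -/
theorem count_quadratic_congruence_minus_branch {R : Type*} [CommRing R] [IsDomain R]
    [IsDiscreteValuationRing R]
    (π : R) (hπ : Irreducible π) (h2 : IsUnit (2 : R))
    (q : ℕ) (hq : Nat.card (R ⧸ Ideal.span {π}) = q)
    (a : R) (u : Rˣ) (k2 : ℕ) (ha : a = π ^ k2 * (u : R))
    (t s : ℕ) (ht : 2 * k2 < t)
    (S : Set (R ⧸ Ideal.span {π} ^ t))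
    (hS : S = {x : R ⧸ Ideal.span {π} ^ t |
        x ∈ (Ideal.span {π} ^ (t - s)).map (Ideal.Quotient.mk (Ideal.span {π} ^ t)) ∧
        (x - Ideal.Quotient.mk (Ideal.span {π} ^ t) a) ^ 2
          = (Ideal.Quotient.mk (Ideal.span {π} ^ t) a) ^ 2 ∧
        x - Ideal.Quotient.mk (Ideal.span {π} ^ t) (2 * a)
          ∈ (Ideal.span {π} ^ (t - k2)).map
              (Ideal.Quotient.mk (Ideal.span {π} ^ t))}) :
    (S.Nonempty ↔ t - s ≤ k2) ∧ (t - s ≤ k2 → Nat.card S = q ^ k2) := by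
  have h2a : 2 * a = π ^ k2 * ↑(h2.unit * u) := by
    rw [ha, Units.val_mul, IsUnit.unit_spec]; ring
  have hmem : ∀ n ≤ t, Ideal.Quotient.mk (span {π} ^ t) (2 * a) ∈
      (span {π} ^ n).map (Ideal.Quotient.mk (span {π} ^ t)) ↔ n ≤ k2 := fun n hn => by
    rw [mk_mem_map_span_singleton_pow_iff hn, h2a, pow_dvd_pow_mul_units_iff hπ]
  have hsq : S = {x | x ∈ (span {π} ^ (t - s)).map (Ideal.Quotient.mk (span {π} ^ t)) ∧
      x - Ideal.Quotient.mk _ (2 * a) ∈ (span {π} ^ (t - k2)).map (Ideal.Quotient.mk _)} := by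
    ext x
    rw [hS]
    exact and_congr_right fun _ => and_iff_right_of_imp <|
      sub_sq_eq_sq_of_sub_two_mul_mem (t := t) (by omega) ⟨(u : R), ha⟩
  rw [hsq, Submodule.setOf_mem_and_sub_mem_nonempty_iff]
  refine ⟨?_, fun h => ?_⟩
  · rcases le_total (t - s) (t - k2) with hle | hle
    · rw [sup_eq_left.mpr (map_mono (pow_le_pow_right hle)), hmem _ (by omega)]
    · rw [sup_eq_right.mpr (map_mono (pow_le_pow_right hle)), hmem _ (by omega)]
      omega
  · rw [Submodule.card_setOf_mem_and_sub_mem (map_mono (pow_le_pow_right (by omega)))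
      ((hmem _ (by omega)).mpr h), card_map_span_singleton_pow hπ.ne_zero (by omega),
      card_quotient_span_singleton_pow hπ.prime, hq, show t - (t - k2) = k2 by omega]
end

section
/- Case B head sum: let q ≥ 2, k ≥ 0 even, s > k/2, and m, ε integers. Define A(s) = ∑_{t=0}^{k} (-1)^{t+1} (2m - 2s + t + ε) q^{min(⌊t/2⌋, s)}. Then A(s) + A(s-1) = 2(1 + q + ⋯ + q^{k/2 - 1}) + q^{k/2} - (4m - 4s + 3 + 2k + 2ε) q^{k/2}. -/
open Finset

theorem sum_range_neg_one_pow_mul_linear_mul_pow_half {R : Type*} [CommRing R]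
    (q C : R) (n : ℕ) :
    ∑ t ∈ range (2 * n + 1), (-1 : R) ^ (t + 1) * (C + 2 * t) * q ^ (t / 2)
      = 2 * ∑ i ∈ range n, q ^ i + q ^ n - (C + 4 * n + 1) * q ^ n := by
  induction n with
  | zero => simp
  | succ n ih =>
    have hodd : (2 * n + 1) / 2 = n := by omega
    have heven : (2 * n + 2) / 2 = n + 1 := by omega
    rw [show 2 * (n + 1) + 1 = 2 * n + 1 + 1 + 1 by ring, sum_range_succ, sum_range_succ, ih,
      hodd, heven, sum_range_succ]
    simp only [pow_succ, pow_mul]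
    push_cast
    ring

theorem caseB_head_sum_general (q : ℤ) (k k2 : ℕ) (hk : k = 2 * k2)
    (m ε : ℤ) (s : ℕ) (hs : k2 < s)
    (A : ℕ → ℤ)
    (hA : ∀ s' : ℕ, A s' = ∑ t ∈ Finset.range (k + 1),
        (-1 : ℤ) ^ (t + 1) * (2 * m - 2 * (s' : ℤ) + (t : ℤ) + ε)
          * q ^ (min (t / 2) s')) :
    A s + A (s - 1)
      = 2 * (∑ i ∈ Finset.range k2, q ^ i) + q ^ k2
        - (4 * m - 4 * (s : ℤ) + 3 + 2 * (k : ℤ) + 2 * ε) * q ^ k2 := by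
  subst hk
  have hcast : ((s - 1 : ℕ) : ℤ) = s - 1 := by omega
  have hpaired : A s + A (s - 1) = ∑ t ∈ range (2 * k2 + 1),
      (-1 : ℤ) ^ (t + 1) * ((4 * m - 4 * s + 2 + 2 * ε) + 2 * t) * q ^ (t / 2) := by
    rw [hA, hA, ← sum_add_distrib]
    refine sum_congr rfl fun t ht => ?_
    have ht : t ≤ 2 * k2 := Nat.lt_succ_iff.mp (mem_range.mp ht)
    rw [min_eq_left (by omega : t / 2 ≤ s), min_eq_left (by omega : t / 2 ≤ s - 1), hcast]
    ring
  rw [hpaired, sum_range_neg_one_pow_mul_linear_mul_pow_half]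
  push_cast
  ring

/-- Case B head sum: with `k = 2·k2` even, `s > k/2` and
`A(s) = ∑_{t=0}^{k} (-1)^{t+1}(2m-2s+t+ε) q^{min(⌊t/2⌋, s)}`, one has
`A(s) + A(s-1) = 2(1 + q + ⋯ + q^{k/2-1}) + q^{k/2} - (4m - 4s + 3 + 2k + 2ε) q^{k/2}`. -/
theorem caseB_head_sum (q : ℤ) (hq : 2 ≤ q) (k k2 : ℕ) (hk : k = 2 * k2)
    (m ε : ℤ) (s : ℕ) (hs : k2 < s)
    (A : ℕ → ℤ)
    (hA : ∀ s' : ℕ, A s' = ∑ t ∈ Finset.range (k + 1),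
        (-1 : ℤ) ^ (t + 1) * (2 * m - 2 * (s' : ℤ) + (t : ℤ) + ε)
          * q ^ (min (t / 2) s')) :
    A s + A (s - 1)
      = 2 * (∑ i ∈ Finset.range k2, q ^ i) + q ^ k2
        - (4 * m - 4 * (s : ℤ) + 3 + 2 * (k : ℤ) + 2 * ε) * q ^ k2 :=
  caseB_head_sum_general q k k2 hk m ε s hs A hA
end
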